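/- Strong consistency of SKS: for every structure R, it is not the case that both R and ¬R are provable in SKS. (Proof: conjoin the two proofs to get a proof of (R,¬R); flip the proof of (R,¬R) to get a derivation from [¬R,R] = ¬(R,¬R)... to f; prepend an instance of generic interaction i↓ from t to [¬R,R], reduced to atomic form via switch; this yields a proof of f, contradicting weak consistency.) -/

import Mathlib

/-- Structures of system SKS. -/
inductive Str : Type
  | f : Str
  | t : Str
  | atom (n : ℕ) : Str
  | or (A B : Str) : Str
  | and (A B : Str) : Str
  | neg (A : Str) : Str

/-- Positive contexts: a structure with one hole, not under a negation. -/
inductive Ctx : Type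
  | hole : Ctx
  | orl (S : Ctx) (T : Str) : Ctx
  | orr (T : Str) (S : Ctx) : Ctx
  | andl (S : Ctx) (T : Str) : Ctx
  | andr (T : Str) (S : Ctx) : Ctx

def Ctx.fill : Ctx → Str → Str
  | .hole, R => R
  | .orl S T, R => .or (S.fill R) T
  | .orr T S, R => .or T (S.fill R)
  | .andl S T, R => .and (S.fill R) T
  | .andr T S, R => .and T (S.fill R)

/-- Structural equivalence `=` of SKS. -/
inductive equiv : Str → Str → Prop
  | refl (R) : equiv R R
  | symm {A B} : equiv A B → equiv B A
  | trans {A B C} : equiv A B → equiv B C → equiv A C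
  | or_congr {A B C D} : equiv A B → equiv C D → equiv (.or A C) (.or B D)
  | and_congr {A B C D} : equiv A B → equiv C D → equiv (.and A C) (.and B D)
  | neg_congr {A B} : equiv A B → equiv (.neg A) (.neg B)
  | or_assoc (A B C) : equiv (.or (.or A B) C) (.or A (.or B C))
  | or_comm (A B) : equiv (.or A B) (.or B A)
  | and_assoc (A B C) : equiv (.and (.and A B) C) (.and A (.and B C))
  | and_comm (A B) : equiv (.and A B) (.and B A)
  | dm_or (A B) : equiv (.neg (.or A B)) (.and (.neg A) (.neg B))
  | dm_and (A B) : equiv (.neg (.and A B)) (.or (.neg A) (.neg B))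
  | neg_neg (A) : equiv (.neg (.neg A)) A
  | neg_f : equiv (.neg .f) .t
  | neg_t : equiv (.neg .t) .f
  | or_f (R) : equiv (.or .f R) R
  | and_t (R) : equiv (.and .t R) R
  | or_t_t : equiv (.or .t .t) .t
  | and_f_f : equiv (.and .f .f) .f

/-- One inference step of SKS, applied in an arbitrary positive context. -/
inductive step : Str → Str → Prop
  | ai_down (S : Ctx) (a : ℕ) :
      step (S.fill .t) (S.fill (.or (.atom a) (.neg (.atom a))))
  | ai_up (S : Ctx) (a : ℕ) :
      step (S.fill (.and (.atom a) (.neg (.atom a)))) (S.fill .f)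
  | s (S : Ctx) (R U T : Str) :
      step (S.fill (.and (.or R U) T)) (S.fill (.or (.and R T) U))
  | c_down (S : Ctx) (R : Str) : step (S.fill (.or R R)) (S.fill R)
  | c_up (S : Ctx) (R : Str) : step (S.fill R) (S.fill (.and R R))
  | w_down (S : Ctx) (R : Str) : step (S.fill .f) (S.fill R)
  | w_up (S : Ctx) (R : Str) : step (S.fill R) (S.fill .t)

/-- Derivations in SKS: chains of rule instances and equivalence steps. -/
inductive Deriv : Str → Str → Prop
  | refl (R) : Deriv R R
  | step {A B C} : step A B → Deriv B C → Deriv A C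
  | eq {A B C} : equiv A B → Deriv B C → Deriv A C

/-! SKS is sound for the two-valued Boolean semantics: structural equivalence preserves the truth
value of a structure, and every rule instance, in any positive context, maps true premises to true
conclusions (contexts are monotone since they contain no negation above the hole). Hence every
structure provable from `t` is true under every valuation, and `R` and `¬R` cannot both be. -/

def Str.eval (v : ℕ → Bool) : Str → Bool
  | .f => false
  | .t => true
  | .atom n => v n
  | .or A B => A.eval v || B.eval v
  | .and A B => A.eval v && B.eval v
  | .neg A => !(A.eval v)

theorem equiv.eval_eq {A B : Str} (h : equiv A B) (v : ℕ → Bool) : A.eval v = B.eval v := by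
  induction h <;> simp_all [Str.eval, Bool.or_assoc, Bool.or_comm, Bool.and_assoc, Bool.and_comm]

theorem Ctx.eval_fill_le (S : Ctx) {A B : Str} (v : ℕ → Bool) (h : A.eval v ≤ B.eval v) :
    (S.fill A).eval v ≤ (S.fill B).eval v := by
  induction S with
  | hole => exact h
  | orl S T ih => exact sup_le_sup_right ih _
  | orr T S ih => exact sup_le_sup_left ih _
  | andl S T ih => exact inf_le_inf_right _ ih
  | andr T S ih => exact inf_le_inf_left _ ih

theorem step.eval_le {A B : Str} (h : step A B) (v : ℕ → Bool) : A.eval v ≤ B.eval v := by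
  cases h with
  | s S R U T =>
    refine S.eval_fill_le v ?_
    simp only [Str.eval]
    cases R.eval v <;> cases U.eval v <;> cases T.eval v <;> decide
  | _ S => refine S.eval_fill_le v ?_; simp [Str.eval]

theorem Deriv.eval_le {A B : Str} (h : Deriv A B) (v : ℕ → Bool) : A.eval v ≤ B.eval v := by
  induction h with
  | refl => exact le_rfl
  | step hAB _ ih => exact (hAB.eval_le v).trans ih
  | eq hAB _ ih => exact (hAB.eval_eq v).trans_le ih

theorem Deriv.eval_eq_true_of_proof {R : Str} (h : Deriv .t R) (v : ℕ → Bool) : R.eval v = true :=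
  top_le_iff.mp (h.eval_le v)

/-- strong consistency of SKS: no structure is provable
together with its negation. -/
theorem strong_consistency (R : Str) :
    ¬ (Deriv .t R ∧ Deriv .t (.neg R)) := by
  rintro ⟨hR, hnegR⟩
  have hTrue := hR.eval_eq_true_of_proof fun _ => true
  have hFalse := hnegR.eval_eq_true_of_proof fun _ => true
  simp [Str.eval, hTrue] at hFalse
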